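/- Let P be a set of path axioms. Every derivation in G3Kt + LabPr(P) whose end sequent is a labeled polytree sequent consists solely of labeled polytree sequents, i.e., every labeled sequent occurring in the derivation is a labeled polytree sequent. -/

import Mathlib

set_option autoImplicit false

/-! # Common definitions: tense logics, nested/labeled/display calculi
    (following Ciabattoni, Lyon, Ramanayake, Tiu,
     "Display to Labeled Proofs and Back Again for Tense Logics") -/

/-- Diamonds: `wd` = ◇ (white diamond), `bd` = ◆ (black diamond). -/
inductive Dmd : Type
  | wd
  | bd
deriving DecidableEq, Repr

/-- Tense formulae in negation normal form:
    `A ::= p | p̄ | A ∧ A | A ∨ A | □A | ◇A | ■A | ◆A`. -/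
inductive Formula : Type
  | pos : Nat → Formula      -- propositional variable p
  | neg : Nat → Formula      -- negated propositional variable p̄
  | and : Formula → Formula → Formula
  | or : Formula → Formula → Formula
  | box : Formula → Formula   -- □
  | dia : Formula → Formula   -- ◇
  | bbox : Formula → Formula  -- ■
  | bdia : Formula → Formula  -- ◆
deriving DecidableEq, Repr

/-- The De Morgan dual `Ā` of a formula `A`. -/
def Formula.dual : Formula → Formula
  | .pos p => .neg p
  | .neg p => .pos p
  | .and A B => .or A.dual B.dual
  | .or A B => .and A.dual B.dual
  | .box A => .dia A.dual
  | .dia A => .box A.dual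
  | .bbox A => .bdia A.dual
  | .bdia A => .bbox A.dual

/-- `A → B` is defined as `Ā ∨ B`. -/
def Formula.imp (A B : Formula) : Formula := A.dual.or B

/-- `A ↔ B` is defined as `(A → B) ∧ (B → A)`. -/
def Formula.iffF (A B : Formula) : Formula := (A.imp B).and (B.imp A)

/-- `⟨?⟩A` for a diamond `⟨?⟩ ∈ {◇, ◆}`. -/
def dmdF : Dmd → Formula → Formula
  | .wd, A => .dia A
  | .bd, A => .bdia A

/-- `⟨?⟩₁…⟨?⟩ₘ A` for a string of diamonds. -/
def applyDmds : List Dmd → Formula → Formula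
  | [], A => A
  | d :: ds, A => dmdF d (applyDmds ds A)

/-- A general path axiom `ΠA → ΣA`, given by the strings `Π` (ant) and `Σ` (suc). -/
structure GenPath : Type where
  ant : List Dmd
  suc : List Dmd

/-- A path axiom `ΠA → ⟨?⟩A`. -/
structure PathAx : Type where
  ant : List Dmd
  suc : Dmd
deriving DecidableEq

/-- Every path axiom is a general path axiom. -/
def pathToGen (F : PathAx) : GenPath := ⟨F.ant, [F.suc]⟩

/-- All instances `ΠA → ΣA` of the general path axioms in `GP`. -/
def gpInstances (GP : Set GenPath) : Set Formula :=
  {F | ∃ gp ∈ GP, ∃ A : Formula, F = (applyDmds gp.ant A).imp (applyDmds gp.suc A)}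

/-- The Hilbert system `Kt + S`: classical propositional axioms, modus ponens,
    the tense axioms, and necessitation for □ and ■, plus the axioms in `S`. -/
inductive KtProof (S : Set Formula) : Formula → Prop
  | ax {A : Formula} : A ∈ S → KtProof S A
  | pl1 (A B : Formula) : KtProof S (A.imp (B.imp A))
  | pl2 (A B : Formula) : KtProof S ((B.dual.imp A.dual).imp (A.imp B))
  | pl3 (A B C : Formula) :
      KtProof S ((A.imp (B.imp C)).imp ((A.imp B).imp (A.imp C)))
  | tense1 (A : Formula) : KtProof S (A.imp (Formula.box (Formula.bdia A)))
  | tense2 (A : Formula) : KtProof S (A.imp (Formula.bbox (Formula.dia A)))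
  | kbox (A B : Formula) :
      KtProof S ((Formula.box (A.imp B)).imp ((Formula.box A).imp (Formula.box B)))
  | kbbox (A B : Formula) :
      KtProof S ((Formula.bbox (A.imp B)).imp ((Formula.bbox A).imp (Formula.bbox B)))
  | boxdual (A : Formula) :
      KtProof S ((Formula.box A).iffF (Formula.dia A.dual).dual)
  | bboxdual (A : Formula) :
      KtProof S ((Formula.bbox A).iffF (Formula.bdia A.dual).dual)
  | mp {A B : Formula} : KtProof S (A.imp B) → KtProof S A → KtProof S B
  | necbox {A : Formula} : KtProof S A → KtProof S (Formula.box A)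
  | necbbox {A : Formula} : KtProof S A → KtProof S (Formula.bbox A)

/-! ## Nested sequents -/

/-- Nested sequents: `X ::= ε | A | X, X | ∘{X} | •{X}`. -/
inductive NSeq : Type
  | empty
  | fml : Formula → NSeq
  | comma : NSeq → NSeq → NSeq
  | white : NSeq → NSeq   -- ∘{X}
  | black : NSeq → NSeq   -- •{X}
deriving DecidableEq, Repr

/-- Comma is associative and commutative with unit ε: the induced congruence. -/
inductive NEquiv : NSeq → NSeq → Prop
  | refl (X : NSeq) : NEquiv X X
  | symm {X Y : NSeq} : NEquiv X Y → NEquiv Y X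
  | trans {X Y Z : NSeq} : NEquiv X Y → NEquiv Y Z → NEquiv X Z
  | comm (X Y : NSeq) : NEquiv (X.comma Y) (Y.comma X)
  | assoc (X Y Z : NSeq) : NEquiv ((X.comma Y).comma Z) (X.comma (Y.comma Z))
  | unit (X : NSeq) : NEquiv (X.comma NSeq.empty) X
  | commaCongr {X X' Y Y' : NSeq} :
      NEquiv X X' → NEquiv Y Y' → NEquiv (X.comma Y) (X'.comma Y')
  | whiteCongr {X Y : NSeq} : NEquiv X Y → NEquiv X.white Y.white
  | blackCongr {X Y : NSeq} : NEquiv X Y → NEquiv X.black Y.black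

/-- `★₁{… ★ₙ{Y} …}` where `★ⱼ = ∘` if `⟨?⟩ⱼ = ◇` and `★ⱼ = •` if `⟨?⟩ⱼ = ◆`. -/
def nestDmds : List Dmd → NSeq → NSeq
  | [], Y => Y
  | .wd :: ds, Y => (nestDmds ds Y).white
  | .bd :: ds, Y => (nestDmds ds Y).black

/-- The structural rules `NestSt(GP)` (premise, conclusion): for each
    `ΠA → ΣA ∈ GP`, from `X, ★Σ{Y}` infer `X, ★Π{Y}`. -/
def NestSt (GP : Set GenPath) : NSeq → NSeq → Prop :=
  fun prem concl => ∃ gp ∈ GP, ∃ X Y : NSeq,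
    prem = X.comma (nestDmds gp.suc Y) ∧ concl = X.comma (nestDmds gp.ant Y)

/-- The empty set of extension rules on nested sequents. -/
def NoNest : NSeq → NSeq → Prop := fun _ _ => False

/-- The shallow nested (display) calculus `SKT` extended with the
    structural rules `Ext` (relating premise to conclusion); nested sequents are
    treated up to the congruence `NEquiv` (comma is AC with unit ε). -/
inductive SKT (Ext : NSeq → NSeq → Prop) : NSeq → Prop
  | id (X : NSeq) (p : Nat) :
      SKT Ext ((X.comma (.fml (.pos p))).comma (.fml (.neg p)))
  | orR {X : NSeq} {A B : Formula} :
      SKT Ext (X.comma ((NSeq.fml A).comma (.fml B))) →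
      SKT Ext (X.comma (.fml (.or A B)))
  | andR {X : NSeq} {A B : Formula} :
      SKT Ext (X.comma (.fml A)) → SKT Ext (X.comma (.fml B)) →
      SKT Ext (X.comma (.fml (.and A B)))
  | ctr {X Y : NSeq} : SKT Ext (X.comma (Y.comma Y)) → SKT Ext (X.comma Y)
  | wk {X Y : NSeq} : SKT Ext X → SKT Ext (X.comma Y)
  | rf {X Y : NSeq} : SKT Ext (X.comma Y.white) → SKT Ext (X.black.comma Y)
  | rp {X Y : NSeq} : SKT Ext (X.comma Y.black) → SKT Ext (X.white.comma Y)
  | bbox {X : NSeq} {A : Formula} :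
      SKT Ext (X.comma (NSeq.fml A).black) → SKT Ext (X.comma (.fml (.bbox A)))
  | box {X : NSeq} {A : Formula} :
      SKT Ext (X.comma (NSeq.fml A).white) → SKT Ext (X.comma (.fml (.box A)))
  | bdia {X Y : NSeq} {A : Formula} :
      SKT Ext ((X.comma (Y.comma (.fml A)).black).comma (.fml (.bdia A))) →
      SKT Ext ((X.comma Y.black).comma (.fml (.bdia A)))
  | dia {X Y : NSeq} {A : Formula} :
      SKT Ext ((X.comma (Y.comma (.fml A)).white).comma (.fml (.dia A))) →
      SKT Ext ((X.comma Y.white).comma (.fml (.dia A)))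
  | ext {X Y : NSeq} : Ext X Y → SKT Ext X → SKT Ext Y
  | equiv {X Y : NSeq} : SKT Ext X → NEquiv X Y → SKT Ext Y

/-! ## Deep nested calculus -/

/-- One-hole contexts over nested sequents (up to `NEquiv` this suffices). -/
inductive Ctx : Type
  | hole
  | commaL : Ctx → NSeq → Ctx
  | white : Ctx → Ctx
  | black : Ctx → Ctx

/-- Filling the hole of a context with a nested sequent. -/
def Ctx.fill : Ctx → NSeq → NSeq
  | .hole, X => X
  | .commaL C Y, X => (C.fill X).comma Y
  | .white C, X => (C.fill X).white
  | .black C, X => (C.fill X).black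

/-- The deep nested calculus `DKT` extended with rules `Ext`
    (premise, conclusion); sequents are treated up to `NEquiv`. -/
inductive DKT (Ext : NSeq → NSeq → Prop) : NSeq → Prop
  | id (C : Ctx) (p : Nat) :
      DKT Ext (C.fill ((NSeq.fml (.pos p)).comma (.fml (.neg p))))
  | andD {C : Ctx} {Y : NSeq} {A B : Formula} :
      DKT Ext (C.fill ((NSeq.fml A).comma Y)) →
      DKT Ext (C.fill ((NSeq.fml B).comma Y)) →
      DKT Ext (C.fill ((NSeq.fml (.and A B)).comma Y))
  | orD {C : Ctx} {Y : NSeq} {A B : Formula} :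
      DKT Ext (C.fill ((NSeq.fml A).comma ((NSeq.fml B).comma Y))) →
      DKT Ext (C.fill ((NSeq.fml (.or A B)).comma Y))
  | bboxD {C : Ctx} {A : Formula} :
      DKT Ext (C.fill ((NSeq.fml (.bbox A)).comma (NSeq.fml A).black)) →
      DKT Ext (C.fill (.fml (.bbox A)))
  | boxD {C : Ctx} {A : Formula} :
      DKT Ext (C.fill ((NSeq.fml (.box A)).comma (NSeq.fml A).white)) →
      DKT Ext (C.fill (.fml (.box A)))
  | bdia1 {C : Ctx} {Y : NSeq} {A : Formula} :
      DKT Ext (C.fill ((Y.comma (.fml A)).black.comma (.fml (.bdia A)))) →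
      DKT Ext (C.fill (Y.black.comma (.fml (.bdia A))))
  | bdia2 {C : Ctx} {Y : NSeq} {A : Formula} :
      DKT Ext (C.fill ((Y.comma (.fml (.bdia A))).white.comma (.fml A))) →
      DKT Ext (C.fill ((Y.comma (.fml (.bdia A))).white))
  | dia1 {C : Ctx} {Y : NSeq} {A : Formula} :
      DKT Ext (C.fill ((Y.comma (.fml A)).white.comma (.fml (.dia A)))) →
      DKT Ext (C.fill (Y.white.comma (.fml (.dia A))))
  | dia2 {C : Ctx} {Y : NSeq} {A : Formula} :
      DKT Ext (C.fill ((Y.comma (.fml (.dia A))).black.comma (.fml A))) →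
      DKT Ext (C.fill ((Y.comma (.fml (.dia A))).black))
  | ext {X Y : NSeq} : Ext X Y → DKT Ext X → DKT Ext Y
  | equiv {X Y : NSeq} : DKT Ext X → NEquiv X Y → DKT Ext Y

/-! ## Display rules and display equivalence -/

/-- `DisplayDeriv X Z`: `Z` is derivable from `X` using only the display rules
    (rf) and (rp) (and rearrangement by the comma-congruence `NEquiv`). -/
inductive DisplayDeriv : NSeq → NSeq → Prop
  | refl (X : NSeq) : DisplayDeriv X X
  | equiv {X Y Z : NSeq} : NEquiv X Y → DisplayDeriv Y Z → DisplayDeriv X Z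
  | rf {X Y Z : NSeq} :
      DisplayDeriv (X.black.comma Y) Z → DisplayDeriv (X.comma Y.white) Z
  | rp {X Y Z : NSeq} :
      DisplayDeriv (X.white.comma Y) Z → DisplayDeriv (X.comma Y.black) Z

/-- Two nested sequents are display equivalent when each is derivable from the
    other using only the display rules. -/
def DisplayEquiv (X Y : NSeq) : Prop := DisplayDeriv X Y ∧ DisplayDeriv Y X

/-! ## Labeled sequents and the labeled calculus G3Kt -/

abbrev Label : Type := Nat

/-- A set of relational atoms `Rxy`. -/
abbrev RelSet : Type := Finset (Label × Label)

/-- A labeled sequent `R, Γ`. -/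
abbrev LSeq : Type := RelSet × Multiset (Label × Formula)

/-- The label `z` occurs in the labeled sequent `S`. -/
def occursLS (z : Label) (S : LSeq) : Prop :=
  (∃ w, (z, w) ∈ S.1 ∨ (w, z) ∈ S.1) ∨ ∃ A, (z, A) ∈ S.2

/-- `R_◇ x y := Rxy` and `R_◆ x y := Ryx`. -/
def relAtom : Dmd → Label → Label → Label × Label
  | .wd, x, y => (x, y)
  | .bd, x, y => (y, x)

/-- Relational atoms of a `Π`-chain through the list of labels `ls`. -/
def chainAtoms : List Dmd → List Label → List (Label × Label)
  | d :: ds, a :: b :: rest => relAtom d a b :: chainAtoms ds (b :: rest)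
  | _, _ => []

/-- `ls` is a chain of labels for the diamond string `ds` from `x` to `y`
    (an empty string forces `x = y`). -/
def IsChainList (ds : List Dmd) (x y : Label) (ls : List Label) : Prop :=
  ls.length = ds.length + 1 ∧ ls.head? = some x ∧ ls.getLast? = some y

/-- The structural rules `LabSt(GP)` (premise, conclusion): for `ΠA → ΣA ∈ GP`,
    from `R, R_Π x y, R_Σ x y, Γ` infer `R, R_Π x y, Γ`, where all labels in
    `R_Σ x y` other than `x, y` are eigenvariables. -/
def LabSt (GP : Set GenPath) : LSeq → LSeq → Prop :=
  fun prem concl => ∃ gp ∈ GP,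
    ∃ (R : RelSet) (Γ : Multiset (Label × Formula)) (x y : Label)
      (als sls : List Label),
      IsChainList gp.ant x y als ∧ IsChainList gp.suc x y sls ∧
      concl = (R ∪ (chainAtoms gp.ant als).toFinset, Γ) ∧
      prem = (R ∪ (chainAtoms gp.ant als).toFinset ∪
                (chainAtoms gp.suc sls).toFinset, Γ) ∧
      (∀ z ∈ sls, z ≠ x → z ≠ y → ¬ occursLS z concl)

/-- The empty set of extension rules on labeled sequents. -/
def NoExt : LSeq → LSeq → Prop := fun _ _ => False

/-- Derivations in the labeled calculus `G3Kt` extended with rules `Ext`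
    (relating premise to conclusion). -/
inductive G3KtD (Ext : LSeq → LSeq → Prop) :
    RelSet → Multiset (Label × Formula) → Type
  | id (R : RelSet) (Γ : Multiset (Label × Formula)) (x : Label) (p : Nat) :
      G3KtD Ext R ((x, .pos p) ::ₘ (x, .neg p) ::ₘ Γ)
  | orR (R : RelSet) (Γ : Multiset (Label × Formula)) (x : Label) (A B : Formula)
      (D : G3KtD Ext R ((x, A) ::ₘ (x, B) ::ₘ Γ)) :
      G3KtD Ext R ((x, .or A B) ::ₘ Γ)
  | andR (R : RelSet) (Γ : Multiset (Label × Formula)) (x : Label) (A B : Formula)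
      (D1 : G3KtD Ext R ((x, A) ::ₘ Γ)) (D2 : G3KtD Ext R ((x, B) ::ₘ Γ)) :
      G3KtD Ext R ((x, .and A B) ::ₘ Γ)
  | boxR (R : RelSet) (Γ : Multiset (Label × Formula)) (x y : Label) (A : Formula)
      (hy : ¬ occursLS y (R, (x, Formula.box A) ::ₘ Γ))
      (D : G3KtD Ext (insert (x, y) R) ((y, A) ::ₘ Γ)) :
      G3KtD Ext R ((x, .box A) ::ₘ Γ)
  | diaR (R : RelSet) (Γ : Multiset (Label × Formula)) (x y : Label) (A : Formula)
      (h : (x, y) ∈ R)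
      (D : G3KtD Ext R ((y, A) ::ₘ (x, Formula.dia A) ::ₘ Γ)) :
      G3KtD Ext R ((x, .dia A) ::ₘ Γ)
  | bboxR (R : RelSet) (Γ : Multiset (Label × Formula)) (x y : Label) (A : Formula)
      (hy : ¬ occursLS y (R, (x, Formula.bbox A) ::ₘ Γ))
      (D : G3KtD Ext (insert (y, x) R) ((y, A) ::ₘ Γ)) :
      G3KtD Ext R ((x, .bbox A) ::ₘ Γ)
  | bdiaR (R : RelSet) (Γ : Multiset (Label × Formula)) (x y : Label) (A : Formula)
      (h : (y, x) ∈ R)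
      (D : G3KtD Ext R ((y, A) ::ₘ (x, Formula.bdia A) ::ₘ Γ)) :
      G3KtD Ext R ((x, .bdia A) ::ₘ Γ)
  | ext (R' : RelSet) (Γ' : Multiset (Label × Formula))
      (R : RelSet) (Γ : Multiset (Label × Formula))
      (h : Ext (R', Γ') (R, Γ)) (D : G3KtD Ext R' Γ') : G3KtD Ext R Γ

/-- Derivability in `G3Kt + Ext`. -/
def G3KtDeriv (Ext : LSeq → LSeq → Prop) (R : RelSet)
    (Γ : Multiset (Label × Formula)) : Prop :=
  Nonempty (G3KtD Ext R Γ)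

/-- `Q` holds of every labeled sequent occurring in the derivation `D`
    (including the end sequent). -/
def G3KtD.allSeq {Ext : LSeq → LSeq → Prop} (Q : LSeq → Prop) :
    ∀ {R : RelSet} {Γ : Multiset (Label × Formula)}, G3KtD Ext R Γ → Prop
  | _, _, .id R Γ x p => Q (R, (x, .pos p) ::ₘ (x, .neg p) ::ₘ Γ)
  | _, _, .orR R Γ x A B D => Q (R, (x, .or A B) ::ₘ Γ) ∧ D.allSeq Q
  | _, _, .andR R Γ x A B D1 D2 =>
      Q (R, (x, .and A B) ::ₘ Γ) ∧ D1.allSeq Q ∧ D2.allSeq Q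
  | _, _, .boxR R Γ x _ A _ D => Q (R, (x, .box A) ::ₘ Γ) ∧ D.allSeq Q
  | _, _, .diaR R Γ x _ A _ D => Q (R, (x, .dia A) ::ₘ Γ) ∧ D.allSeq Q
  | _, _, .bboxR R Γ x _ A _ D => Q (R, (x, .bbox A) ::ₘ Γ) ∧ D.allSeq Q
  | _, _, .bdiaR R Γ x _ A _ D => Q (R, (x, .bdia A) ::ₘ Γ) ∧ D.allSeq Q
  | _, _, .ext _ _ R Γ _ D => Q (R, Γ) ∧ D.allSeq Q

/-! ## Paths, inverses, compositions, completion, propagation rules -/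

/-- The inverse of a diamond: `◇⁻¹ = ◆` and `◆⁻¹ = ◇`. -/
def Dmd.inv : Dmd → Dmd
  | .wd => .bd
  | .bd => .wd

/-- The inverse `I(F)` of a path axiom `F`. -/
def PathAx.inv (F : PathAx) : PathAx := ⟨(F.ant.map Dmd.inv).reverse, F.suc.inv⟩

/-- `I(P)`, the set of inverses of the path axioms in `P`. -/
def invSet (P : Set PathAx) : Set PathAx := {F | ∃ G ∈ P, F = G.inv}

/-- The completion `P*`: the smallest set of path axioms containing `P`,
    containing `◇A → ◇A` and `◆A → ◆A`, and closed under compositions. -/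
inductive Completion (P : Set PathAx) : PathAx → Prop
  | base {F : PathAx} : F ∈ P → Completion P F
  | wrefl : Completion P ⟨[Dmd.wd], Dmd.wd⟩
  | brefl : Completion P ⟨[Dmd.bd], Dmd.bd⟩
  | comp {F G : PathAx} (i : Nat) (hi : i < G.ant.length) :
      Completion P F → Completion P G → G.ant.get ⟨i, hi⟩ = F.suc →
      Completion P ⟨G.ant.take i ++ F.ant ++ G.ant.drop (i + 1), G.suc⟩

/-- `(P ∪ I(P))*`. -/
def PStar (P : Set PathAx) : PathAx → Prop := Completion (P ∪ invSet P)

/-- A path from `x` to `y` with the given string of diamonds in the propagation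
    graph determined by the edge set `E`: each `Rxy` contributes the labeled
    edges `(x, y, ◇)` and `(y, x, ◆)`. -/
inductive LPath (E : Finset (Label × Label)) : Label → Label → List Dmd → Prop
  | nil (x : Label) : LPath E x x []
  | fwd {x z y : Label} {ds : List Dmd} :
      (x, z) ∈ E → LPath E z y ds → LPath E x y (Dmd.wd :: ds)
  | bwd {x z y : Label} {ds : List Dmd} :
      (z, x) ∈ E → LPath E z y ds → LPath E x y (Dmd.bd :: ds)

/-- The labeled propagation rules `LabPr(P)` (premise, conclusion):
    from `R, x:⟨?⟩A, y:A, Γ` infer `R, x:⟨?⟩A, Γ`, provided there is a path `π`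
    from `x` to `y` in the propagation graph of the premise whose string `Π`
    satisfies `ΠA → ⟨?⟩A ∈ (P ∪ I(P))*`. -/
def LabPr (P : Set PathAx) : LSeq → LSeq → Prop :=
  fun prem concl =>
    ∃ (R : RelSet) (Γ : Multiset (Label × Formula)) (x y : Label)
      (A : Formula) (d : Dmd) (Pi : List Dmd),
      prem = (R, (x, dmdF d A) ::ₘ (y, A) ::ₘ Γ) ∧
      concl = (R, (x, dmdF d A) ::ₘ Γ) ∧
      LPath R x y Pi ∧ PStar P ⟨Pi, d⟩

/-! ## Labeled graphs, labeled polytrees, and the translations 𝔏 and 𝔑 -/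

/-- A labeled graph `(V, E, L)`: vertices decorated with multisets of formulae. -/
structure LGraph : Type where
  V : Finset Label
  E : Finset (Label × Label)
  L : Label → Multiset Formula

/-- Union of labeled graphs (multiset union of labels at shared vertices). -/
def LGraph.union (G H : LGraph) : LGraph :=
  ⟨G.V ∪ H.V, G.E ∪ H.E, fun z => G.L z + H.L z⟩

/-- Isomorphism of labeled graphs: a bijection between the vertex sets
    preserving edges and vertex labels. -/
def LGraph.Iso (G H : LGraph) : Prop :=
  ∃ f : Label → Label, Set.BijOn f ↑G.V ↑H.V ∧
    (∀ u ∈ G.V, ∀ v ∈ G.V, ((u, v) ∈ G.E ↔ (f u, f v) ∈ H.E)) ∧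
    (∀ v ∈ G.V, G.L v = H.L (f v))

/-- A labeled graph is a labeled polytree when its underlying undirected
    graph is a tree. -/
def LGraph.IsPolytree (G : LGraph) : Prop :=
  (∀ x y : Label, (x, y) ∈ G.E → (y, x) ∉ G.E) ∧
  (∀ e ∈ G.E, e.1 ∈ G.V ∧ e.2 ∈ G.V) ∧
  ((SimpleGraph.fromRel fun a b => (a, b) ∈ G.E).induce (↑G.V : Set Label)).IsTree

/-- The translation `𝔏ₓ` from nested sequents to labeled graphs (relational,
    since fresh vertices may be chosen arbitrarily): `LabT x X G` states that
    `G` is a labeled graph obtained by translating `X` starting at vertex `x`. -/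
inductive LabT : Label → NSeq → LGraph → Prop
  | empty (x : Label) : LabT x .empty ⟨∅, ∅, fun _ => 0⟩
  | fml (x : Label) (A : Formula) :
      LabT x (.fml A) ⟨{x}, ∅, fun z => if z = x then {A} else 0⟩
  | comma {x : Label} {X Y : NSeq} {G H : LGraph} :
      LabT x X G → LabT x Y H → G.V ∩ H.V ⊆ {x} →
      LabT x (X.comma Y) (G.union H)
  | white {x y : Label} {X : NSeq} {G : LGraph} :
      LabT y X G → x ∉ G.V → x ≠ y →
      LabT x X.white ⟨insert x (insert y G.V), insert (x, y) G.E, G.L⟩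
  | black {x y : Label} {X : NSeq} {G : LGraph} :
      LabT y X G → x ∉ G.V → x ≠ y →
      LabT x X.black ⟨insert x (insert y G.V), insert (y, x) G.E, G.L⟩

/-- The translation `𝔑ₓ` from labeled polytrees (rooted at a chosen vertex `x`)
    to nested sequents: the inverse of the translation `𝔏ₓ`. -/
def NTrans (x : Label) (G : LGraph) (X : NSeq) : Prop := LabT x X G

/-- The labeled graph of a labeled sequent `R, Γ`: vertices are the occurring
    labels, edges are given by `R`, and each vertex `x` is labeled by the
    multiset `{A | x:A ∈ Γ}`. -/
def toLGraph (R : RelSet) (Γ : Multiset (Label × Formula)) : LGraph where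
  V := R.image Prod.fst ∪ R.image Prod.snd ∪ (Γ.map Prod.fst).toFinset
  E := R
  L := fun z => (Γ.filter fun p => p.1 = z).map Prod.snd

/-- The multiset of labeled formulae of a labeled graph, read as a sequent. -/
def LGraph.toSeqGamma (G : LGraph) : Multiset (Label × Formula) :=
  G.V.val.bind fun v => (G.L v).map fun A => (v, A)

/-- The set of labels occurring in a labeled sequent. -/
def seqLabels (R : RelSet) (Γ : Multiset (Label × Formula)) : Set Label :=
  {z | (∃ w, (z, w) ∈ R ∨ (w, z) ∈ R) ∨ ∃ A, (z, A) ∈ Γ}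

/-- `R, Γ` is a labeled polytree sequent: its underlying undirected graph
    (on the occurring labels) is a tree. -/
def IsPolytreeSeq (R : RelSet) (Γ : Multiset (Label × Formula)) : Prop :=
  (∀ x y : Label, (x, y) ∈ R → (y, x) ∉ R) ∧
  ((SimpleGraph.fromRel fun a b => (a, b) ∈ R).induce (seqLabels R Γ)).IsTree

/-- The labeled edges `(u, v, ◇)` and `(v, u, ◆)` of the propagation graph
    determined by an edge set. -/
def propEdges (E : Finset (Label × Label)) : Set (Label × Label × Dmd) :=
  {e | ∃ u v : Label, (u, v) ∈ E ∧ (e = (u, v, Dmd.wd) ∨ e = (v, u, Dmd.bd))}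

/-- The deep propagation rules `DeepPr(P)` (premise, conclusion), expressed via
    the labeled polytree representation of nested sequents: from
    `X[⟨?⟩A]ᵢ[A]ⱼ` infer `X[⟨?⟩A]ᵢ[∅]ⱼ`, provided there is a path from node `i`
    (= `u`) to node `j` (= `v`) in the propagation graph of the premise whose
    string `Π` satisfies `ΠA → ⟨?⟩A ∈ (P ∪ I(P))*`. -/
def DeepPrL (P : Set PathAx) : NSeq → NSeq → Prop :=
  fun prem concl =>
    ∃ (r : Label) (G : LGraph) (u v : Label) (A : Formula) (d : Dmd)
      (Pi : List Dmd),
      LabT r prem G ∧ LPath G.E u v Pi ∧ PStar P ⟨Pi, d⟩ ∧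
      dmdF d A ∈ G.L u ∧ A ∈ G.L v ∧
      LabT r concl ⟨G.V, G.E, fun z => if z = v then (G.L v).erase A else G.L z⟩

/-- Substitution of the label `y` by the label `x`. -/
def subLabel (x y z : Label) : Label := if z = y then x else z


/-! ### Auxiliary lemmas for Statement 17 -/

open SimpleGraph in
/-- Attaching a pendant vertex `y` to a tree at `x` yields a tree. -/
lemma pendant_isTree (G G' : SimpleGraph Label) (s : Set Label) (x y : Label)
    (hx : x ∈ s) (hy : y ∉ s)
    (hagree : ∀ a b : Label, a ∈ s → b ∈ s → (G'.Adj a b ↔ G.Adj a b))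
    (hxy : G'.Adj x y)
    (hyd : ∀ z, G'.Adj y z → z = x)
    (ht : (G.induce s).IsTree) : (G'.induce (insert y s)).IsTree := by
  have hxny : x ≠ y := fun h => hy (h ▸ hx)
  set T := G.induce s with hT
  set T' := G'.induce (insert y s) with hT'
  let f : T →g T' := ⟨fun v => ⟨v.1, Or.inr v.2⟩,
    fun {a b} hab => (hagree a.1 b.1 a.2 b.2).2 hab⟩
  have finj : Function.Injective f := fun a b h =>
    Subtype.ext (show (f a).1 = (f b).1 from congrArg Subtype.val h)
  let y' : ↥(insert y s) := ⟨y, Set.mem_insert y s⟩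
  let x' : ↥(insert y s) := ⟨x, Or.inr hx⟩
  have hadjyx : T'.Adj y' x' := hxy.symm
  constructor
  · -- connectivity
    haveI : Nonempty ↥(insert y s) := ⟨y'⟩
    have hreach : ∀ v : ↥(insert y s), T'.Reachable v x' := by
      rintro ⟨v, hv | hv⟩
      · subst hv; exact hadjyx.reachable
      · have hr : T.Reachable ⟨v, hv⟩ ⟨x, hx⟩ := ht.isConnected.preconnected _ _
        exact hr.map f
    exact Connected.mk (fun u v => (hreach u).trans (hreach v).symm)
  · -- acyclicity
    intro v c hc
    by_cases hmem : y' ∈ c.support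
    · have hc' := hc.rotate hmem
      revert hc'
      generalize c.rotate y' hmem = c'
      intro hc'
      cases c' with
      | nil => exact hc'.ne_nil rfl
      | cons h p =>
        rename_i u
        have hu : u = x' := Subtype.ext (hyd u.1 h)
        subst hu
        have hnn : ¬ p.reverse.Nil := Walk.not_nil_of_ne (fun hh => hxny (congrArg Subtype.val hh).symm)
        obtain ⟨w, h2, q, hq⟩ := Walk.not_nil_iff.mp hnn
        have hw : w = x' := Subtype.ext (hyd w.1 h2)
        subst hw
        have hmem2 : s(y', x') ∈ p.edges := by
          have : s(y', x') ∈ p.reverse.edges := by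
            rw [hq, Walk.edges_cons]; exact List.mem_cons_self
          rwa [Walk.edges_reverse, List.mem_reverse] at this
        have hnd := hc'.edges_nodup
        rw [Walk.edges_cons] at hnd
        exact (List.nodup_cons.mp hnd).1 hmem2
    · have hsup : ∀ z ∈ c.support, z.1 ∈ s := by
        intro z hz
        rcases z.2 with h1 | h1
        · exact absurd hz (by
            have : z = y' := Subtype.ext h1
            rw [this]; exact hmem)
        · exact h1
      have hlift : ∀ {a b : ↥(insert y s)} (p : T'.Walk a b) (ha : a.1 ∈ s) (hb : b.1 ∈ s),
          (∀ z ∈ p.support, z.1 ∈ s) → ∃ q : T.Walk ⟨a.1, ha⟩ ⟨b.1, hb⟩, q.map f = p := by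
        intro a b p
        induction p with
        | nil => intro ha _ _; exact ⟨Walk.nil, rfl⟩
        | @cons a m b h p ih =>
          intro ha hb hs
          have hm : m.1 ∈ s := hs m (by rw [Walk.support_cons]; exact List.mem_cons_of_mem _ p.start_mem_support)
          obtain ⟨q, hq⟩ := ih hm hb (fun z hz => hs z (by rw [Walk.support_cons]; exact List.mem_cons_of_mem _ hz))
          refine ⟨Walk.cons (show T.Adj ⟨a.1, ha⟩ ⟨m.1, hm⟩ from (hagree a.1 m.1 ha hm).1 h) q, ?_⟩
          rw [Walk.map_cons, hq]
      have hv : v.1 ∈ s := hsup v c.start_mem_support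
      obtain ⟨q, hq⟩ := hlift c hv hv hsup
      have hqc : q.IsCycle := by
        rw [← Walk.map_isCycle_iff_of_injective finj]
        exact hq ▸ hc
      exact ht.IsAcyclic q hqc

lemma seqLabels_cons (R : RelSet) (Γ : Multiset (Label × Formula)) (x : Label) (A : Formula) :
    seqLabels R ((x, A) ::ₘ Γ) = insert x (seqLabels R Γ) := by
  ext z
  simp only [seqLabels, Set.mem_setOf_eq, Multiset.mem_cons, Set.mem_insert_iff, Prod.mk.injEq]
  constructor
  · rintro (h | ⟨B, ⟨rfl, rfl⟩ | hB⟩)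
    · exact Or.inr (Or.inl h)
    · exact Or.inl rfl
    · exact Or.inr (Or.inr ⟨B, hB⟩)
  · rintro (rfl | h | ⟨B, hB⟩)
    · exact Or.inr ⟨A, Or.inl ⟨rfl, rfl⟩⟩
    · exact Or.inl h
    · exact Or.inr ⟨B, Or.inr hB⟩

lemma isPolytreeSeq_congr {R : RelSet} {Γ Γ' : Multiset (Label × Formula)}
    (h : seqLabels R Γ = seqLabels R Γ') : IsPolytreeSeq R Γ ↔ IsPolytreeSeq R Γ' := by
  unfold IsPolytreeSeq; rw [h]

lemma lpath_endpoint {E : Finset (Label × Label)} {x y : Label} {ds : List Dmd}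
    (h : LPath E x y ds) : y = x ∨ ∃ w, (y, w) ∈ E ∨ (w, y) ∈ E := by
  induction h with
  | nil => exact Or.inl rfl
  | fwd hxz _ ih =>
    rcases ih with rfl | hh
    · exact Or.inr ⟨_, Or.inr hxz⟩
    · exact Or.inr hh
  | bwd hzx _ ih =>
    rcases ih with rfl | hh
    · exact Or.inr ⟨_, Or.inl hzx⟩
    · exact Or.inr hh

lemma seqLabels_insert (R : RelSet) (Γ : Multiset (Label × Formula)) (x y : Label) :
    seqLabels (insert (x, y) R) Γ = insert x (insert y (seqLabels R Γ)) := by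
  ext z
  simp only [seqLabels, Set.mem_setOf_eq, Finset.mem_insert, Prod.mk.injEq, Set.mem_insert_iff]
  constructor
  · rintro (⟨w, (⟨rfl, rfl⟩ | hzw) | (⟨rfl, rfl⟩ | hwz)⟩ | hf)
    · exact Or.inl rfl
    · exact Or.inr (Or.inr (Or.inl ⟨w, Or.inl hzw⟩))
    · exact Or.inr (Or.inl rfl)
    · exact Or.inr (Or.inr (Or.inl ⟨w, Or.inr hwz⟩))
    · exact Or.inr (Or.inr (Or.inr hf))
  · rintro (rfl | rfl | ⟨w, hw | hw⟩ | hf)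
    · exact Or.inl ⟨y, Or.inl (Or.inl ⟨rfl, rfl⟩)⟩
    · exact Or.inl ⟨x, Or.inr (Or.inl ⟨rfl, rfl⟩)⟩
    · exact Or.inl ⟨w, Or.inl (Or.inr hw)⟩
    · exact Or.inl ⟨w, Or.inr (Or.inr hw)⟩
    · exact Or.inr hf

/-- Adding a relational atom between `x` (occurring) and a fresh `y` preserves being a
polytree sequent, for any premise multiset whose labels are those of the conclusion plus `y`. -/
lemma isPolytreeSeq_insert_fresh (R : RelSet) (Γc Γp : Multiset (Label × Formula))
    (x y : Label) (e : Label × Label) (he : e = (x, y) ∨ e = (y, x))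
    (hx : x ∈ seqLabels R Γc) (hy : y ∉ seqLabels R Γc)
    (hlab : seqLabels (insert e R) Γp = insert y (seqLabels R Γc))
    (h : IsPolytreeSeq R Γc) : IsPolytreeSeq (insert e R) Γp := by
  have hxny : x ≠ y := fun hh => hy (hh ▸ hx)
  have hyR : ∀ w, (y, w) ∉ R ∧ (w, y) ∉ R := by
    intro w
    constructor <;> intro hw <;> exact hy (Or.inl ⟨w, by tauto⟩)
  constructor
  · -- no 2-cycles
    intro a b hab hba
    rw [Finset.mem_insert] at hab hba
    have key : ∀ u v : Label, (u, v) = e → u = y ∨ v = y := by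
      intro u v huv
      rcases he with rfl | rfl
      · injection huv with h1 h2; exact Or.inr h2
      · injection huv with h1 h2; exact Or.inl h1
    have hyRnot : ∀ u v : Label, (u, v) ∈ R → u ≠ y ∧ v ≠ y := by
      intro u v huv
      constructor <;> rintro rfl
      · exact (hyR v).1 huv
      · exact (hyR u).2 huv
    rcases hab with hab | hab <;> rcases hba with hba | hba
    · rcases he with rfl | rfl <;> (injection hab with h1 h2; injection hba with h3 h4)
      · exact hxny (h1.symm.trans h4)
      · exact hxny (h4.symm.trans h1)
    · obtain hh | hh := key a b hab
      · exact (hyRnot b a hba).2 hh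
      · exact (hyRnot b a hba).1 hh
    · obtain hh | hh := key b a hba
      · exact (hyRnot a b hab).2 hh
      · exact (hyRnot a b hab).1 hh
    · exact h.1 a b hab hba
  · -- tree
    rw [hlab]
    have hgr : (SimpleGraph.fromRel fun a b => (a, b) ∈ insert e R) =
        (SimpleGraph.fromRel fun a b => (a, b) ∈ insert (x, y) R) := by
      ext a b
      rcases he with rfl | rfl
      · rfl
      · simp only [SimpleGraph.fromRel_adj, Finset.mem_insert, Prod.mk.injEq]
        tauto
    rw [hgr]
    refine pendant_isTree _ _ _ x y hx hy ?_ ?_ ?_ h.2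
    · intro a b ha hb
      rw [SimpleGraph.fromRel_adj, SimpleGraph.fromRel_adj]
      constructor
      · rintro ⟨hne, hin | hin⟩ <;> rw [Finset.mem_insert] at hin
        · rcases hin with heq | hin
          · injection heq with h1 h2; exact absurd (h2 ▸ hb) hy
          · exact ⟨hne, Or.inl hin⟩
        · rcases hin with heq | hin
          · injection heq with h1 h2; exact absurd (h2 ▸ ha) hy
          · exact ⟨hne, Or.inr hin⟩
      · rintro ⟨hne, hin | hin⟩
        · exact ⟨hne, Or.inl (Finset.mem_insert_of_mem hin)⟩
        · exact ⟨hne, Or.inr (Finset.mem_insert_of_mem hin)⟩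
    · exact (SimpleGraph.fromRel_adj _ _ _).mpr ⟨hxny, Or.inl (Finset.mem_insert_self _ _)⟩
    · intro z hz
      rw [SimpleGraph.fromRel_adj] at hz
      obtain ⟨hne, hin | hin⟩ := hz <;> rw [Finset.mem_insert] at hin
      · rcases hin with heq | hin
        · exact absurd (Prod.ext_iff.mp heq).2.symm hne
        · exact absurd hin (hyR z).1
      · rcases hin with heq | hin
        · exact (Prod.ext_iff.mp heq).1
        · exact absurd hin (hyR z).2

/-- Lemma `Lpath2`: every derivation in `G3Kt + LabPr(P)`
    whose end sequent is a labeled polytree sequent consists solely of labeled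
    polytree sequents. -/
theorem g3kt_labpr_derivation_all_polytree (P : Set PathAx) (R : RelSet)
    (Γ : Multiset (Label × Formula)) (D : G3KtD (LabPr P) R Γ)
    (h : IsPolytreeSeq R Γ) :
    D.allSeq (fun S => IsPolytreeSeq S.1 S.2) := by
  revert h
  induction D with
  | id R Γ x p => intro h; exact h
  | orR R Γ x A B D ih =>
    intro h
    refine ⟨h, ih ?_⟩
    refine (isPolytreeSeq_congr ?_).mpr h
    rw [seqLabels_cons, seqLabels_cons, seqLabels_cons, Set.insert_idem]
  | andR R Γ x A B D1 D2 ih1 ih2 =>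
    intro h
    have hL : ∀ C : Formula, seqLabels R ((x, C) ::ₘ Γ) =
        seqLabels R ((x, Formula.and A B) ::ₘ Γ) := by
      intro C; rw [seqLabels_cons, seqLabels_cons]
    exact ⟨h, ih1 ((isPolytreeSeq_congr (hL A)).mpr h),
      ih2 ((isPolytreeSeq_congr (hL B)).mpr h)⟩
  | boxR R Γ x y A hy D ih =>
    intro h
    have hyn : y ∉ seqLabels R ((x, Formula.box A) ::ₘ Γ) := hy
    have hxm : x ∈ seqLabels R ((x, Formula.box A) ::ₘ Γ) :=
      Or.inr ⟨Formula.box A, Multiset.mem_cons_self ..⟩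
    refine ⟨h, ih ?_⟩
    refine isPolytreeSeq_insert_fresh R _ _ x y (x, y) (Or.inl rfl) hxm hyn ?_ h
    rw [seqLabels_cons, seqLabels_cons, seqLabels_insert, Set.insert_comm x y,
      Set.insert_idem]
  | diaR R Γ x y A hmem D ih =>
    intro h
    refine ⟨h, ih ?_⟩
    refine (isPolytreeSeq_congr ?_).mpr h
    rw [seqLabels_cons, seqLabels_cons]
    have hyL : y ∈ seqLabels R Γ := Or.inl ⟨x, Or.inr hmem⟩
    exact Set.insert_eq_self.mpr (Set.mem_insert_of_mem _ hyL)
  | bboxR R Γ x y A hy D ih =>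
    intro h
    have hyn : y ∉ seqLabels R ((x, Formula.bbox A) ::ₘ Γ) := hy
    have hxm : x ∈ seqLabels R ((x, Formula.bbox A) ::ₘ Γ) :=
      Or.inr ⟨Formula.bbox A, Multiset.mem_cons_self ..⟩
    refine ⟨h, ih ?_⟩
    refine isPolytreeSeq_insert_fresh R _ _ x y (y, x) (Or.inr rfl) hxm hyn ?_ h
    rw [seqLabels_cons, seqLabels_cons, seqLabels_insert, Set.insert_idem]
  | bdiaR R Γ x y A hmem D ih =>
    intro h
    refine ⟨h, ih ?_⟩
    refine (isPolytreeSeq_congr ?_).mpr h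
    rw [seqLabels_cons, seqLabels_cons]
    have hyL : y ∈ seqLabels R Γ := Or.inl ⟨x, Or.inl hmem⟩
    exact Set.insert_eq_self.mpr (Set.mem_insert_of_mem _ hyL)
  | ext R' Γ' R Γ hext D ih =>
    intro h
    obtain ⟨R0, Γ0, x, y, A, d, Pi, hp, hcq, hpath, hstar⟩ := hext
    rw [Prod.mk.injEq] at hp hcq
    obtain ⟨rfl, rfl⟩ := hp
    obtain ⟨rfl, rfl⟩ := hcq
    refine ⟨h, ih ?_⟩
    refine (isPolytreeSeq_congr ?_).mpr h
    rw [seqLabels_cons, seqLabels_cons, seqLabels_cons, Set.insert_comm]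
    refine Set.insert_eq_self.mpr ?_
    rcases lpath_endpoint hpath with rfl | ⟨w, hw | hw⟩
    · exact Set.mem_insert _ _
    · exact Set.mem_insert_of_mem _ (Or.inl ⟨w, Or.inl hw⟩)
    · exact Set.mem_insert_of_mem _ (Or.inl ⟨w, Or.inr hw⟩)
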